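/- arXiv:1203.0482 — 2 statements merged into one kernel-verified Lean document; each statement's English description precedes it below -/
import Mathlib

section
/- Ladder Mayer–Vietoris lemma (Proposition 'ditsche' of the paper, full ℤ-indexed form): Suppose given, for each integer i, abelian groups A_i, B_i, C_i, A'_i, B'_i, C'_i, group homomorphisms f_i : A_i → B_i, g_i : B_i → C_i, h_i : C_i → A_{i+1} and f'_i : A'_i → B'_i, g'_i : B'_i → C'_i, h'_i : C'_i → A'_{i+1}, and vertical homomorphisms a_i : A_i → A'_i, b_i : B_i → B'_i, c_i : C_i → C'_i such that: (1) both rows are exact at every position, i.e. for all i, ker f_i = im h_{i-1}, ker g_i = im f_i, ker h_i = im g_i, and likewise ker f'_i = im h'_{i-1}, ker g'_i = im f'_i, ker h'_i = im g'_i; (2) all squares commute: f'_i ∘ a_i = b_i ∘ f_i, g'_i ∘ b_i = c_i ∘ g_i, h'_i ∘ c_i = a_{i+1} ∘ h_i; (3) every c_i is an isomorphism. Then the sequence ⋯ → A_i →^{(a_i, −f_i)} A'_i ⊕ B_i →^{⟨f'_i, b_i⟩} B'_i →^{h_i ∘ c_i^{−1} ∘ g'_i} A_{i+1} → A'_{i+1}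 ⊕ B_{i+1} → ⋯ is exact at every position; that is, for every i: im(a_i, −f_i) = ker⟨f'_i, b_i⟩, im⟨f'_i, b_i⟩ = ker(h_i ∘ c_i^{−1} ∘ g'_i), and im(h_i ∘ c_i^{−1} ∘ g'_i) = ker(a_{i+1}, −f_{i+1}). -/
/-- Ladder Mayer–Vietoris lemma (full ℤ-indexed form): given two ℤ-indexed long
exact sequences of abelian groups connected by vertical maps making all squares
commute, with all vertical maps `c i` isomorphisms, the induced Mayer–Vietoris
type sequence `⋯ → A i → A' i ⊕ B i → B' i → A (i+1) → ⋯` is exact at every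
position. -/
theorem ladder_mayer_vietoris
    (A B C A' B' C' : ℤ → Type*)
    [∀ i, AddCommGroup (A i)] [∀ i, AddCommGroup (B i)] [∀ i, AddCommGroup (C i)]
    [∀ i, AddCommGroup (A' i)] [∀ i, AddCommGroup (B' i)] [∀ i, AddCommGroup (C' i)]
    (f : ∀ i, A i →+ B i) (g : ∀ i, B i →+ C i) (h : ∀ i, C i →+ A (i + 1))
    (f' : ∀ i, A' i →+ B' i) (g' : ∀ i, B' i →+ C' i) (h' : ∀ i, C' i →+ A' (i + 1))
    (a : ∀ i, A i →+ A' i) (b : ∀ i, B i →+ B' i) (c : ∀ i, C i ≃+ C' i)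
    -- exactness of the bottom row at every position
    (hex_f : ∀ i, (h i).range = (f (i + 1)).ker)
    (hex_g : ∀ i, (f i).range = (g i).ker)
    (hex_h : ∀ i, (g i).range = (h i).ker)
    -- exactness of the top row at every position
    (hex_f' : ∀ i, (h' i).range = (f' (i + 1)).ker)
    (hex_g' : ∀ i, (f' i).range = (g' i).ker)
    (hex_h' : ∀ i, (g' i).range = (h' i).ker)
    -- commutativity of all squares
    (hsq_f : ∀ i, ∀ x : A i, f' i (a i x) = b i (f i x))
    (hsq_g : ∀ i, ∀ x : B i, g' i (b i x) = c i (g i x))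
    (hsq_h : ∀ i, ∀ x : C i, h' i (c i x) = a (i + 1) (h i x)) :
    ∀ i : ℤ,
      ((a i).prod (-(f i))).range = ((f' i).coprod (b i)).ker ∧
      ((f' i).coprod (b i)).range
        = ((h i).comp ((c i).symm.toAddMonoidHom.comp (g' i))).ker ∧
      ((h i).comp ((c i).symm.toAddMonoidHom.comp (g' i))).range
        = ((a (i + 1)).prod (-(f (i + 1)))).ker := by
  intro i
  obtain ⟨j, rfl⟩ : ∃ j, i = j + 1 := ⟨i - 1, by ring⟩
  refine ⟨?_, ?_, ?_⟩
  · ext ⟨x', y⟩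
    simp only [AddMonoidHom.mem_range, AddMonoidHom.mem_ker, AddMonoidHom.prod_apply,
      AddMonoidHom.coprod_apply, AddMonoidHom.neg_apply, Prod.mk.injEq]
    constructor
    · rintro ⟨x, rfl, rfl⟩
      rw [hsq_f, ← map_add]
      simp
    · intro heq
      have h1 : g' (j + 1) (f' (j + 1) x') = 0 := by
        have : f' (j + 1) x' ∈ (f' (j + 1)).range := ⟨x', rfl⟩
        rw [hex_g'] at this
        exact this
      have hgy : g (j + 1) y = 0 := by
        apply (c (j + 1)).injective
        rw [← hsq_g, map_zero]
        have : b (j + 1) y = - f' (j + 1) x' := by linear_combination (norm := abel) heq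
        rw [this, map_neg, h1, neg_zero]
      have : y ∈ (f (j + 1)).range := by rw [hex_g]; exact hgy
      obtain ⟨z, hz⟩ := this
      have h2 : f' (j + 1) (x' + a (j + 1) z) = 0 := by
        rw [map_add, hsq_f, hz, heq]
      have : x' + a (j + 1) z ∈ (h' j).range := by rw [hex_f']; exact h2
      obtain ⟨w', hw'⟩ := this
      refine ⟨h j ((c j).symm w') - z, ?_, ?_⟩
      · rw [map_sub, ← hsq_h, (c j).apply_symm_apply, hw']
        abel
      · have hfh : f (j + 1) (h j ((c j).symm w')) = 0 := by
          have : h j ((c j).symm w') ∈ (h j).range := ⟨_, rfl⟩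
          rw [hex_f] at this
          exact this
        rw [map_sub, hfh, hz]
        abel
  · ext y'
    simp only [AddMonoidHom.mem_range, AddMonoidHom.mem_ker, AddMonoidHom.coprod_apply,
      AddMonoidHom.comp_apply, AddEquiv.coe_toAddMonoidHom, Prod.exists]
    constructor
    · rintro ⟨x', y, rfl⟩
      have h1 : g' (j + 1) (f' (j + 1) x') = 0 := by
        have : f' (j + 1) x' ∈ (f' (j + 1)).range := ⟨x', rfl⟩
        rw [hex_g'] at this; exact this
      rw [map_add, h1, zero_add, hsq_g, (c (j + 1)).symm_apply_apply]
      have : g (j + 1) y ∈ (h (j + 1)).ker := by rw [← hex_h]; exact ⟨y, rfl⟩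
      exact this
    · intro heq
      set w := (c (j + 1)).symm (g' (j + 1) y') with hw
      have : w ∈ (g (j + 1)).range := by rw [hex_h]; exact heq
      obtain ⟨y, hy⟩ := this
      have hby : g' (j + 1) (b (j + 1) y) = g' (j + 1) y' := by
        rw [hsq_g, hy, hw, (c (j + 1)).apply_symm_apply]
      have : y' - b (j + 1) y ∈ (f' (j + 1)).range := by
        rw [hex_g']
        show g' (j + 1) (y' - b (j + 1) y) = 0
        rw [map_sub, hby, sub_self]
      obtain ⟨x', hx'⟩ := this
      exact ⟨x', y, by rw [hx']; abel⟩
  · ext x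
    simp only [AddMonoidHom.mem_range, AddMonoidHom.mem_ker, AddMonoidHom.comp_apply,
      AddEquiv.coe_toAddMonoidHom, AddMonoidHom.prod_apply, AddMonoidHom.neg_apply,
      Prod.mk_eq_zero, neg_eq_zero]
    constructor
    · rintro ⟨y', rfl⟩
      set w := (c (j + 1)).symm (g' (j + 1) y') with hw
      constructor
      · rw [← hsq_h, hw, (c (j + 1)).apply_symm_apply]
        have : g' (j + 1) y' ∈ (h' (j + 1)).ker := by rw [← hex_h']; exact ⟨y', rfl⟩
        exact this
      · have : h (j + 1) w ∈ (f (j + 1 + 1)).ker := by rw [← hex_f]; exact ⟨w, rfl⟩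
        exact this
    · rintro ⟨ha, hf⟩
      have : x ∈ (h (j + 1)).range := by rw [hex_f]; exact hf
      obtain ⟨w, hwx⟩ := this
      have : c (j + 1) w ∈ (g' (j + 1)).range := by
        rw [hex_h']
        show h' (j + 1) (c (j + 1) w) = 0
        rw [hsq_h, hwx, ha]
      obtain ⟨y', hy'⟩ := this
      exact ⟨y', by rw [hy', (c (j + 1)).symm_apply_apply, hwx]⟩
end

section
/- Exactness at A₂ in the Mayer–Vietoris ladder sequence: Let B₁, C₁, A₂, B₂, B'₁, C'₁, A'₂ be abelian groups and let g₁ : B₁ → C₁, h₁ : C₁ → A₂, f₂ : A₂ → B₂, g'₁ : B'₁ → C'₁, h'₁ : C'₁ → A'₂, c₁ : C₁ → C'₁, a₂ : A₂ → A'₂ be group homomorphisms such that: the square commutes (h'₁ ∘ c₁ = a₂ ∘ h₁); the bottom row is exact at A₂ (im h₁ = ker f₂); the top row is exact at C'₁ (im g'₁ = ker h'₁); and c₁ is an isomorphism with inverse c₁^{−1}. Then the image of the composite homomorphism h₁ ∘ c₁^{−1} ∘ g'₁ : B'₁ → A₂ equals the kernel of the homomorphism A₂ → A'₂ ⊕ B₂,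 x ↦ (a₂(x), −f₂(x)). -/
/-!
Transporting the exactness `im g'₁ = ker h'₁` along the isomorphism `c₁` and then the commuting
square, the image of `h₁ ∘ c₁⁻¹ ∘ g'₁` is `h₁(h₁⁻¹(ker a₂)) = im h₁ ∩ ker a₂`; by exactness of the
bottom row this is `ker f₂ ∩ ker a₂`, the kernel of `(a₂, -f₂)`.
-/

namespace AddMonoidHom

theorem ker_neg {G A : Type*} [AddGroup G] [AddCommGroup A] (f : G →+ A) : (-f).ker = f.ker := by
  ext x
  simp

theorem range_comp_symm_comp_eq_range_inf_ker {B' C C' A A' : Type*}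
    [AddGroup B'] [AddGroup C] [AddGroup C'] [AddGroup A] [AddGroup A']
    {g' : B' →+ C'} {h' : C' →+ A'} {h : C →+ A} {a : A →+ A'} (c : C ≃+ C')
    (hsq : h'.comp c.toAddMonoidHom = a.comp h) (hex : g'.range = h'.ker) :
    (h.comp (c.symm.toAddMonoidHom.comp g')).range = h.range ⊓ a.ker := calc
  _ = (g'.range.map c.symm.toAddMonoidHom).map h := by rw [range_comp, range_comp]
  _ = (h'.ker.comap c.toAddMonoidHom).map h := by
    rw [hex]; exact congrArg _ (AddSubgroup.map_equiv_eq_comap_symm c.symm _)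
  _ = (a.ker.comap h).map h := by rw [comap_ker, comap_ker, hsq]
  _ = h.range ⊓ a.ker := AddSubgroup.map_comap_eq h a.ker

end AddMonoidHom

theorem mayer_vietoris_exact_at_A_general
    (C₁ A₂ B₂ B'₁ C'₁ A'₂ : Type*)
    [AddCommGroup C₁] [AddCommGroup A₂] [AddCommGroup B₂]
    [AddCommGroup B'₁] [AddCommGroup C'₁] [AddCommGroup A'₂]
    (h₁ : C₁ →+ A₂) (f₂ : A₂ →+ B₂)
    (g'₁ : B'₁ →+ C'₁) (h'₁ : C'₁ →+ A'₂)
    (c₁ : C₁ ≃+ C'₁) (a₂ : A₂ →+ A'₂)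
    -- commuting square
    (hsq_h : ∀ x : C₁, h'₁ (c₁ x) = a₂ (h₁ x))
    -- exactness of the bottom row at A₂
    (hex_A : h₁.range = f₂.ker)
    -- exactness of the top row at C'₁
    (hex_C' : g'₁.range = h'₁.ker) :
    (h₁.comp (c₁.symm.toAddMonoidHom.comp g'₁)).range = (a₂.prod (-f₂)).ker := by
  rw [AddMonoidHom.range_comp_symm_comp_eq_range_inf_ker c₁ (AddMonoidHom.ext hsq_h) hex_C',
    hex_A, AddMonoidHom.ker_prod, AddMonoidHom.ker_neg, inf_comm]

/-- Exactness at `A₂` in the Mayer–Vietoris ladder sequence: the image of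
`h₁ ∘ c₁⁻¹ ∘ g'₁` equals the kernel of `x ↦ (a₂ x, -f₂ x)`. -/
theorem mayer_vietoris_exact_at_A
    (B₁ C₁ A₂ B₂ B'₁ C'₁ A'₂ : Type*)
    [AddCommGroup B₁] [AddCommGroup C₁] [AddCommGroup A₂] [AddCommGroup B₂]
    [AddCommGroup B'₁] [AddCommGroup C'₁] [AddCommGroup A'₂]
    (g₁ : B₁ →+ C₁) (h₁ : C₁ →+ A₂) (f₂ : A₂ →+ B₂)
    (g'₁ : B'₁ →+ C'₁) (h'₁ : C'₁ →+ A'₂)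
    (c₁ : C₁ ≃+ C'₁) (a₂ : A₂ →+ A'₂)
    -- commuting square
    (hsq_h : ∀ x : C₁, h'₁ (c₁ x) = a₂ (h₁ x))
    -- exactness of the bottom row at A₂
    (hex_A : h₁.range = f₂.ker)
    -- exactness of the top row at C'₁
    (hex_C' : g'₁.range = h'₁.ker) :
    (h₁.comp (c₁.symm.toAddMonoidHom.comp g'₁)).range = (a₂.prod (-f₂)).ker :=
  mayer_vietoris_exact_at_A_general C₁ A₂ B₂ B'₁ C'₁ A'₂ h₁ f₂ g'₁ h'₁ c₁ a₂ hsq_h hex_A hex_C'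
end
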